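/- Define F_d(x,t) = h(tx) + 2h((1-t)x) + h(1-(2-t)x) - (2 - 2/d)(h(x) + h(1-x)) for 0 \le x \le t \le 1, with h(y) = -y log y, h(0)=0. Then for each fixed x \in (0,1), the map t \mapsto F_d(x,t) is continuous and strictly monotone decreasing on [x, 1]. -/

import Mathlib

open Real Set

/-- The entropy function `h(x) = -x log x` (with `h(0) = 0`, since `log 0 = 0` in Mathlib). -/
noncomputable def h (x : ℝ) : ℝ := -x * Real.log x

/-- The function `F_d(x,t)` governing the expected number of induced subgraphs of
density `x` and average degree `t d`. -/
noncomputable def F (d : ℕ) (x t : ℝ) : ℝ :=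
  h (t * x) + 2 * h ((1 - t) * x) + h (1 - (2 - t) * x)
    - (2 - 2 / (d : ℝ)) * (h x + h (1 - x))

/-!
The three arguments `t x`, `(1 - t) x`, `1 - (2 - t) x` of `h` in `F_d(x, ·)` are affine in `t`
with slopes `x`, `-x`, `x`, so the constant terms of `h' = -log - 1` cancel and
`∂F/∂t = x (2 log ((1 - t) x) - log (t x) - log (1 - (2 - t) x))`.
This is negative for `x < t < 1` because
`(t x) (1 - (2 - t) x) - ((1 - t) x) ^ 2 = x (t - x) > 0`.
-/

theorem h_eq_negMulLog : h = negMulLog := rfl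

theorem continuous_F (d : ℕ) (x : ℝ) : Continuous (F d x) := by
  unfold F
  rw [h_eq_negMulLog]
  fun_prop

theorem hasDerivAt_h_comp {f : ℝ → ℝ} {f' t : ℝ} (hf : HasDerivAt f f' t) (hft : f t ≠ 0) :
    HasDerivAt (fun s => h (f s)) ((-log (f t) - 1) * f') t :=
  (hasDerivAt_negMulLog hft).comp t hf

theorem hasDerivAt_F (d : ℕ) {x t : ℝ} (hB : t * x ≠ 0) (hA : (1 - t) * x ≠ 0)
    (hC : 1 - (2 - t) * x ≠ 0) :
    HasDerivAt (F d x)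
      (x * (2 * log ((1 - t) * x) - log (t * x) - log (1 - (2 - t) * x))) t := by
  have dB := hasDerivAt_h_comp ((hasDerivAt_id' t).mul_const x) hB
  have dA := hasDerivAt_h_comp (((hasDerivAt_id' t).const_sub 1).mul_const x) hA
  have dC := hasDerivAt_h_comp ((((hasDerivAt_id' t).const_sub 2).mul_const x).const_sub 1) hC
  exact (((dB.add (dA.const_mul 2)).add dC).sub_const
    ((2 - 2 / (d : ℝ)) * (h x + h (1 - x)))).congr_deriv (by ring)

theorem two_mul_log_lt_log_add_log {x t : ℝ} (hx : 0 < x) (hxt : x < t) (ht : t < 1) :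
    2 * log ((1 - t) * x) < log (t * x) + log (1 - (2 - t) * x) := by
  have hA : 0 < (1 - t) * x := mul_pos (sub_pos.mpr ht) hx
  have hB : 0 < t * x := mul_pos (hx.trans hxt) hx
  have hC : 0 < 1 - (2 - t) * x := by nlinarith
  have hgap : (t * x) * (1 - (2 - t) * x) - ((1 - t) * x) ^ 2 = x * (t - x) := by ring
  have hsq : ((1 - t) * x) ^ 2 < (t * x) * (1 - (2 - t) * x) := by
    nlinarith [mul_pos hx (sub_pos.mpr hxt)]
  have := log_lt_log (pow_pos hA 2) hsq
  rwa [log_pow, log_mul hB.ne' hC.ne', Nat.cast_ofNat] at this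

theorem stmt_18_general (d : ℕ) (x : ℝ) (hx : x ∈ Ioo (0 : ℝ) 1) :
    ContinuousOn (fun t => F d x t) (Icc x 1) ∧
    StrictAntiOn (fun t => F d x t) (Icc x 1) := by
  obtain ⟨hx0, -⟩ := hx
  have hcont := (continuous_F d x).continuousOn (s := Icc x 1)
  refine ⟨hcont, strictAntiOn_of_deriv_neg (convex_Icc x 1) hcont fun t ht => ?_⟩
  rw [interior_Icc] at ht
  obtain ⟨hxt, ht1⟩ := ht
  have hC : 0 < 1 - (2 - t) * x := by nlinarith
  rw [(hasDerivAt_F d (by nlinarith) (by nlinarith) hC.ne').deriv]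
  exact mul_neg_of_pos_of_neg hx0 (by linarith [two_mul_log_lt_log_add_log hx0 hxt ht1])

theorem stmt_18 (d : ℕ) (hd : 3 ≤ d) (x : ℝ) (hx : x ∈ Ioo (0 : ℝ) 1) :
    ContinuousOn (fun t => F d x t) (Icc x 1) ∧
    StrictAntiOn (fun t => F d x t) (Icc x 1) :=
  stmt_18_general d x hx
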